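/- (Theorem 5.1) Let a, b, q₁, q₂, K₃, K₄, μ₁, μ₂ be real constants, β ∈ (0,π/2), ρ₀ > 0, G : ℝ × ℝ → ℝ three times continuously differentiable, and p = p(t,R) any smooth function of t and R only. Consider the anti-plane shear deformation x(t,X) = (X₁, X₂, X₃ + G(t,R)), helical fibers A₁, A₂ with pitch β, hyperelastic energy Wʰ = a(I₁−3) + b(I₂−3) + q₁(I₄−1)² + q₂(I₆−1)² + K₃ I₈² + K₄ I₈, viscoelastic potential Wᵛ = (μ₁/4) J₂ (I₁−3) + (μ₂/2) J₉,₁ (I₄−1)² + (μ₂/2) J₉,₂ (I₆−1)², and the visco-hyperelastic stress P = F S with S = −p C⁻¹ + 2ρ₀ ( ∂Ŵʰ/∂C + ∂Ŵᵛ/∂Ċ ). Then the third (Z-) component of the momentum equations ρ₀ ∂²x₃/∂t² = Σ_j ∂P_{3j}/∂X_j holds at all points with R > 0 if and only if G satisfies the nonlinear third-order PDE G_tt = α ( G_R/R + G_RR ) + μ₁ G_R [ G_R ( G_tR/R + G_tRR )( 1 + 2 G_R² ) + 2 G_tR G_RR ( 1 + 4 G_R² ) ], where α = 2(a + b); in particular,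 this PDE involves neither q₁, q₂, K₃, K₄, μ₂ nor the pitch angle β, but only a, b, and μ₁. -/

import Mathlib

noncomputable section

open Real Matrix

/-- Cylindrical radius `R = √(X₁² + X₂²)` of a material point `X`. -/
def rad (X : Fin 3 → ℝ) : ℝ := Real.sqrt (X 0 ^ 2 + X 1 ^ 2)

/-- The anti-plane shear deformation `x(t,X) = (X₁, X₂, X₃ + G(t,R))`. -/
def defm (G : ℝ → ℝ → ℝ) (t : ℝ) (X : Fin 3 → ℝ) : Fin 3 → ℝ :=
  ![X 0, X 1, X 2 + G t (rad X)]

/-- Partial derivative of a scalar field on `ℝ³` with respect to the `j`-th coordinate. -/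
def pd (f : (Fin 3 → ℝ) → ℝ) (j : Fin 3) (X : Fin 3 → ℝ) : ℝ :=
  deriv (fun s => f (Function.update X j s)) (X j)

/-- Deformation gradient `F_{ij} = ∂x_i/∂X_j` of the anti-plane shear deformation. -/
def defGrad (G : ℝ → ℝ → ℝ) (t : ℝ) (X : Fin 3 → ℝ) : Matrix (Fin 3) (Fin 3) ℝ :=
  Matrix.of fun i j => pd (fun Y => defm G t Y i) j X

/-- Right Cauchy–Green tensor `C = FᵀF`. -/
def CG (G : ℝ → ℝ → ℝ) (t : ℝ) (X : Fin 3 → ℝ) : Matrix (Fin 3) (Fin 3) ℝ :=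
  (defGrad G t X)ᵀ * defGrad G t X

/-- Symmetrization `(M + Mᵀ)/2` of a matrix. -/
def symM (M : Matrix (Fin 3) (Fin 3) ℝ) : Matrix (Fin 3) (Fin 3) ℝ :=
  (1 / 2 : ℝ) • (M + Mᵀ)

/-- First helical fiber field `A₁ = (−cosβ sinΦ, cosβ cosΦ, sinβ)`. -/
def fib1 (β : ℝ) (X : Fin 3 → ℝ) : Fin 3 → ℝ :=
  ![-(Real.cos β) * (X 1 / rad X), Real.cos β * (X 0 / rad X), Real.sin β]

/-- Second helical fiber field `A₂ = (−cosβ sinΦ, cosβ cosΦ, −sinβ)`. -/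
def fib2 (β : ℝ) (X : Fin 3 → ℝ) : Fin 3 → ℝ :=
  ![-(Real.cos β) * (X 1 / rad X), Real.cos β * (X 0 / rad X), -(Real.sin β)]

/-- Invariant `I₁ = tr C`. -/
def inv1 (M : Matrix (Fin 3) (Fin 3) ℝ) : ℝ := M.trace

/-- Invariant `I₂ = ½((tr C)² − tr(C²))`. -/
def inv2 (M : Matrix (Fin 3) (Fin 3) ℝ) : ℝ := (M.trace ^ 2 - (M * M).trace) / 2

/-- Invariant `I₄ = AᵀCA` (and `I₆` for the second fiber). -/
def inv4 (A : Fin 3 → ℝ) (M : Matrix (Fin 3) (Fin 3) ℝ) : ℝ := A ⬝ᵥ (M *ᵥ A)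

/-- Invariant `I₅ = AᵀC²A` (and `I₇` for the second fiber). -/
def inv5 (A : Fin 3 → ℝ) (M : Matrix (Fin 3) (Fin 3) ℝ) : ℝ := A ⬝ᵥ ((M * M) *ᵥ A)

/-- Invariant `I₈ = (A₁ᵀA₂)(A₁ᵀCA₂)`. -/
def inv8 (A₁ A₂ : Fin 3 → ℝ) (M : Matrix (Fin 3) (Fin 3) ℝ) : ℝ :=
  (A₁ ⬝ᵥ A₂) * (A₁ ⬝ᵥ (M *ᵥ A₂))

/-- Matrix of partial derivatives of a scalar function of a matrix with respect to the
matrix entries, evaluated at `C`. -/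
def matPD (f : Matrix (Fin 3) (Fin 3) ℝ → ℝ) (C : Matrix (Fin 3) (Fin 3) ℝ) :
    Matrix (Fin 3) (Fin 3) ℝ :=
  Matrix.of fun i j => deriv (fun s : ℝ => f (C + s • Matrix.single i j 1)) 0

/-- Partial derivative in the first (time) variable. -/
def dt (G : ℝ → ℝ → ℝ) : ℝ → ℝ → ℝ := fun t R => deriv (fun τ => G τ R) t

/-- Partial derivative in the second (radial) variable. -/
def dR (G : ℝ → ℝ → ℝ) : ℝ → ℝ → ℝ := fun t R => deriv (fun r => G t r) R

/-- The Mooney–Rivlin / quadratic-reinforcement stored energy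
`W = a(I₁−3) + b(I₂−3) + q₁(I₄−1)² + q₂(I₆−1)² + K₃I₈² + K₄I₈`, evaluated (as `Ŵ`) at the
invariants of the symmetrized matrix in place of `C`. -/
def storedWMR (a b q₁ q₂ K₃ K₄ β : ℝ) (X : Fin 3 → ℝ)
    (M : Matrix (Fin 3) (Fin 3) ℝ) : ℝ :=
  a * (inv1 (symM M) - 3) + b * (inv2 (symM M) - 3)
    + q₁ * (inv4 (fib1 β X) (symM M) - 1) ^ 2
    + q₂ * (inv4 (fib2 β X) (symM M) - 1) ^ 2
    + K₃ * (inv8 (fib1 β X) (fib2 β X) (symM M)) ^ 2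
    + K₄ * inv8 (fib1 β X) (fib2 β X) (symM M)
/-- Time derivative `Ċ = ∂C/∂t` of the right Cauchy–Green tensor at fixed `X`. -/
def CGdot (G : ℝ → ℝ → ℝ) (t : ℝ) (X : Fin 3 → ℝ) : Matrix (Fin 3) (Fin 3) ℝ :=
  Matrix.of fun i j => deriv (fun τ => CG G τ X i j) t

/-- Viscoelastic pseudo-invariant `J₂ = tr(Ċ²)`. -/
def J2inv (M : Matrix (Fin 3) (Fin 3) ℝ) : ℝ := (M * M).trace

/-- Viscoelastic pseudo-invariant `J₉ = Aᵀ Ċ² A`. -/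
def J9inv (A : Fin 3 → ℝ) (M : Matrix (Fin 3) (Fin 3) ℝ) : ℝ := A ⬝ᵥ ((M * M) *ᵥ A)

/-- The viscoelastic potential
`Wᵛ = (μ₁/4) J₂ (I₁−3) + (μ₂/2) J₉,₁ (I₄−1)² + (μ₂/2) J₉,₂ (I₆−1)²`, evaluated at the
invariants of the symmetrizations of the two matrix arguments (`C` and `Ċ`). -/
def storedWv (μ₁ μ₂ β : ℝ) (X : Fin 3 → ℝ)
    (Cm D : Matrix (Fin 3) (Fin 3) ℝ) : ℝ :=
  μ₁ / 4 * J2inv (symM D) * (inv1 (symM Cm) - 3)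
    + μ₂ / 2 * J9inv (fib1 β X) (symM D) * (inv4 (fib1 β X) (symM Cm) - 1) ^ 2
    + μ₂ / 2 * J9inv (fib2 β X) (symM D) * (inv4 (fib2 β X) (symM Cm) - 1) ^ 2

/-- Visco-hyperelastic first Piola–Kirchhoff stress `P = F S`,
`S = −p C⁻¹ + 2ρ₀ (∂Ŵʰ/∂C + ∂Ŵᵛ/∂Ċ)`. -/
def PK1v (Wh : (Fin 3 → ℝ) → Matrix (Fin 3) (Fin 3) ℝ → ℝ)
    (Wv : (Fin 3 → ℝ) → Matrix (Fin 3) (Fin 3) ℝ → Matrix (Fin 3) (Fin 3) ℝ → ℝ)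
    (p : ℝ → ℝ → ℝ) (ρ₀ : ℝ) (G : ℝ → ℝ → ℝ) (t : ℝ) (X : Fin 3 → ℝ) :
    Matrix (Fin 3) (Fin 3) ℝ :=
  defGrad G t X *
    (-(p t (rad X)) • (CG G t X)⁻¹ +
      (2 * ρ₀) • (matPD (Wh X) (CG G t X)
        + matPD (fun D => Wv X (CG G t X) D) (CGdot G t X)))

/-- second-variable partial derivative of an uncurried function -/
def pR (f : ℝ × ℝ → ℝ) : ℝ × ℝ → ℝ := fun q => fderiv ℝ f q (0, 1)
/-- first-variable partial derivative of an uncurried function -/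
def pT (f : ℝ × ℝ → ℝ) : ℝ × ℝ → ℝ := fun q => fderiv ℝ f q (1, 0)

lemma hasDerivAt_slice_snd {f : ℝ × ℝ → ℝ} {t r : ℝ}
    (hf : DifferentiableAt ℝ f (t, r)) :
    HasDerivAt (fun r' => f (t, r')) (pR f (t, r)) r := by
  have h2 : HasDerivAt (fun r' : ℝ => ((t, r') : ℝ × ℝ)) ((0 : ℝ), (1 : ℝ)) r :=
    (hasDerivAt_const r t).prodMk (hasDerivAt_id r)
  exact (hf.hasFDerivAt.comp_hasDerivAt r h2)

lemma hasDerivAt_slice_fst {f : ℝ × ℝ → ℝ} {t r : ℝ}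
    (hf : DifferentiableAt ℝ f (t, r)) :
    HasDerivAt (fun t' => f (t', r)) (pT f (t, r)) t := by
  have h2 : HasDerivAt (fun t' : ℝ => ((t', r) : ℝ × ℝ)) ((1 : ℝ), (0 : ℝ)) t :=
    (hasDerivAt_id t).prodMk (hasDerivAt_const t r)
  exact (hf.hasFDerivAt.comp_hasDerivAt t h2)

lemma contDiff_pR {f : ℝ × ℝ → ℝ} {n m : ℕ} (hf : ContDiff ℝ n f) (h : m + 1 ≤ n) :
    ContDiff ℝ m (pR f) := by
  have : ContDiff ℝ m (fderiv ℝ f) := hf.fderiv_right (by exact_mod_cast h)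
  exact this.clm_apply contDiff_const

lemma contDiff_pT {f : ℝ × ℝ → ℝ} {n m : ℕ} (hf : ContDiff ℝ n f) (h : m + 1 ≤ n) :
    ContDiff ℝ m (pT f) := by
  have : ContDiff ℝ m (fderiv ℝ f) := hf.fderiv_right (by exact_mod_cast h)
  exact this.clm_apply contDiff_const

lemma clairaut {f : ℝ × ℝ → ℝ} (hf : ContDiff ℝ 2 f) (x : ℝ × ℝ) (v w : ℝ × ℝ) :
    fderiv ℝ (fun q => fderiv ℝ f q v) x w = fderiv ℝ (fun q => fderiv ℝ f q w) x v := by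
  have hf1 : Differentiable ℝ f := hf.differentiable (by norm_num)
  have hf' : ContDiff ℝ 1 (fderiv ℝ f) := hf.fderiv_right (le_refl _)
  have h2 : HasFDerivAt (fderiv ℝ f) (fderiv ℝ (fderiv ℝ f) x) x :=
    ((hf'.differentiable (by norm_num)) x).hasFDerivAt
  have key : ∀ u : ℝ × ℝ,
      fderiv ℝ (fun q => fderiv ℝ f q u) x =
        (ContinuousLinearMap.apply ℝ ℝ u).comp (fderiv ℝ (fderiv ℝ f) x) := by
    intro u
    exact (((ContinuousLinearMap.apply ℝ ℝ u).hasFDerivAt).comp x h2).fderiv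
  have sym := second_derivative_symmetric (f' := fderiv ℝ f)
    (fun y => (hf1 y).hasFDerivAt) h2 w v
  rw [key v, key w]
  simpa using sym

/-- pRT swap -/
lemma pR_pT_swap {f : ℝ × ℝ → ℝ} (hf : ContDiff ℝ 2 f) (x : ℝ × ℝ) :
    pR (pT f) x = pT (pR f) x := clairaut hf x (1,0) (0,1)
lemma dR_rep {H : ℝ → ℝ → ℝ} {h : ℝ × ℝ → ℝ} (e : ∀ t r, H t r = h (t, r))
    (hh : Differentiable ℝ h) (t r : ℝ) : dR H t r = pR h (t, r) := by
  have : (fun r' => H t r') = fun r' => h (t, r') := funext fun r' => e t r'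
  rw [dR, this]
  exact (hasDerivAt_slice_snd (hh _)).deriv

lemma dt_rep {H : ℝ → ℝ → ℝ} {h : ℝ × ℝ → ℝ} (e : ∀ t r, H t r = h (t, r))
    (hh : Differentiable ℝ h) (t r : ℝ) : dt H t r = pT h (t, r) := by
  have : (fun t' => H t' r) = fun t' => h (t', r) := funext fun t' => e t' r
  rw [dt, this]
  exact (hasDerivAt_slice_fst (hh _)).deriv

lemma hasDerivAt_sliceR {H : ℝ → ℝ → ℝ} {h : ℝ × ℝ → ℝ} (e : ∀ t r, H t r = h (t, r))
    (hh : Differentiable ℝ h) (t r : ℝ) :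
    HasDerivAt (fun r' => H t r') (dR H t r) r := by
  have h1 : (fun r' => H t r') = fun r' => h (t, r') := funext fun r' => e t r'
  rw [dR_rep e hh, h1]
  exact hasDerivAt_slice_snd (hh _)

lemma hasDerivAt_sliceT {H : ℝ → ℝ → ℝ} {h : ℝ × ℝ → ℝ} (e : ∀ t r, H t r = h (t, r))
    (hh : Differentiable ℝ h) (t r : ℝ) :
    HasDerivAt (fun t' => H t' r) (dt H t r) t := by
  have h1 : (fun t' => H t' r) = fun t' => h (t', r) := funext fun t' => e t' r
  rw [dt_rep e hh, h1]
  exact hasDerivAt_slice_fst (hh _)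

section Gfacts

variable {G : ℝ → ℝ → ℝ} (hG : ContDiff ℝ 3 (fun q : ℝ × ℝ => G q.1 q.2))

private def Fu (G : ℝ → ℝ → ℝ) : ℝ × ℝ → ℝ := fun q => G q.1 q.2

lemma eG : ∀ t r, G t r = Fu G (t, r) := fun _ _ => rfl

include hG

lemma diff_Fu : Differentiable ℝ (Fu G) := hG.differentiable (by norm_num)
lemma cd_pR : ContDiff ℝ 2 (pR (Fu G)) := contDiff_pR hG (by norm_num)
lemma cd_pT : ContDiff ℝ 2 (pT (Fu G)) := contDiff_pT hG (by norm_num)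
lemma cd_pRR : ContDiff ℝ 1 (pR (pR (Fu G))) := contDiff_pR (cd_pR hG) (by norm_num)
lemma cd_pTR : ContDiff ℝ 1 (pT (pR (Fu G))) := contDiff_pT (cd_pR hG) (by norm_num)
lemma cd_pTT : ContDiff ℝ 1 (pT (pT (Fu G))) := contDiff_pT (cd_pT hG) (by norm_num)

lemma edR : ∀ t r, dR G t r = pR (Fu G) (t, r) :=
  dR_rep (eG) (diff_Fu hG)
lemma edt : ∀ t r, dt G t r = pT (Fu G) (t, r) :=
  dt_rep (eG) (diff_Fu hG)
lemma edRR : ∀ t r, dR (dR G) t r = pR (pR (Fu G)) (t, r) :=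
  dR_rep (edR hG) ((cd_pR hG).differentiable (by norm_num))
lemma edtR : ∀ t r, dt (dR G) t r = pT (pR (Fu G)) (t, r) :=
  dt_rep (edR hG) ((cd_pR hG).differentiable (by norm_num))
lemma edtt : ∀ t r, dt (dt G) t r = pT (pT (Fu G)) (t, r) :=
  dt_rep (edt hG) ((cd_pT hG).differentiable (by norm_num))
lemma edRtR : ∀ t r, dR (dt (dR G)) t r = pR (pT (pR (Fu G))) (t, r) :=
  dR_rep (edtR hG) ((cd_pTR hG).differentiable (by norm_num))
lemma edtRR : ∀ t r, dt (dR (dR G)) t r = pT (pR (pR (Fu G))) (t, r) :=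
  dt_rep (edRR hG) ((cd_pRR hG).differentiable (by norm_num))

/-- Clairaut for the mixed third derivative. -/
lemma mixed_swap : ∀ t r, dR (dt (dR G)) t r = dt (dR (dR G)) t r := by
  intro t r
  rw [edRtR hG, edtRR hG]
  exact pR_pT_swap (cd_pR hG) (t, r)

-- HasDerivAt facts
lemma hdG_R (t r : ℝ) : HasDerivAt (fun r' => G t r') (dR G t r) r :=
  hasDerivAt_sliceR (eG) (diff_Fu hG) t r
lemma hdG_t (t r : ℝ) : HasDerivAt (fun t' => G t' r) (dt G t r) t :=
  hasDerivAt_sliceT (eG) (diff_Fu hG) t r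
lemma hd_dRG_t (t r : ℝ) : HasDerivAt (fun t' => dR G t' r) (dt (dR G) t r) t :=
  hasDerivAt_sliceT (edR hG) ((cd_pR hG).differentiable (by norm_num)) t r
lemma hd_dRG_R (t r : ℝ) : HasDerivAt (fun r' => dR G t r') (dR (dR G) t r) r :=
  hasDerivAt_sliceR (edR hG) ((cd_pR hG).differentiable (by norm_num)) t r
lemma hd_dtRG_R (t r : ℝ) :
    HasDerivAt (fun r' => dt (dR G) t r') (dR (dt (dR G)) t r) r :=
  hasDerivAt_sliceR (edtR hG) ((cd_pTR hG).differentiable (by norm_num)) t r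
lemma hd_dtG_t (t r : ℝ) : HasDerivAt (fun t' => dt G t' r) (dt (dt G) t r) t :=
  hasDerivAt_sliceT (edt hG) ((cd_pT hG).differentiable (by norm_num)) t r

end Gfacts
section RadFacts

lemma rad_sq {X : Fin 3 → ℝ} (h : rad X > 0) : (X 0) ^ 2 + (X 1) ^ 2 = (rad X) ^ 2 := by
  rw [rad, Real.sq_sqrt (by positivity)]

lemma rad_pos_sum {X : Fin 3 → ℝ} (h : rad X > 0) : (X 0) ^ 2 + (X 1) ^ 2 > 0 := by
  have := Real.sqrt_pos.mp h
  simpa [rad] using this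

lemma rad_update0 (X : Fin 3 → ℝ) (s : ℝ) :
    rad (Function.update X 0 s) = Real.sqrt (s ^ 2 + (X 1) ^ 2) := by
  rw [rad, Function.update_self, Function.update_of_ne (by decide)]

lemma rad_update1 (X : Fin 3 → ℝ) (s : ℝ) :
    rad (Function.update X 1 s) = Real.sqrt ((X 0) ^ 2 + s ^ 2) := by
  rw [rad, Function.update_self, Function.update_of_ne (by decide)]

lemma rad_update2 (X : Fin 3 → ℝ) (s : ℝ) :
    rad (Function.update X 2 s) = rad X := by
  rw [rad, rad, Function.update_of_ne (by decide), Function.update_of_ne (by decide)]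

lemma hasDerivAt_rad0 {X : Fin 3 → ℝ} (h : rad X > 0) :
    HasDerivAt (fun s => Real.sqrt (s ^ 2 + (X 1) ^ 2)) (X 0 / rad X) (X 0) := by
  have hne : (X 0) ^ 2 + (X 1) ^ 2 ≠ 0 := ne_of_gt (rad_pos_sum h)
  have h1 : HasDerivAt (fun s : ℝ => s ^ 2 + (X 1) ^ 2) (2 * X 0) (X 0) := by
    simpa using (hasDerivAt_pow 2 (X 0)).add_const ((X 1) ^ 2)
  have h2 := (Real.hasDerivAt_sqrt hne).comp (X 0) h1
  have h3 : 1 / (2 * Real.sqrt ((X 0) ^ 2 + (X 1) ^ 2)) * (2 * X 0) = X 0 / rad X := by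
    rw [show Real.sqrt ((X 0) ^ 2 + (X 1) ^ 2) = rad X from rfl]
    field_simp
  rwa [h3] at h2

lemma hasDerivAt_rad1 {X : Fin 3 → ℝ} (h : rad X > 0) :
    HasDerivAt (fun s => Real.sqrt ((X 0) ^ 2 + s ^ 2)) (X 1 / rad X) (X 1) := by
  have hne : (X 0) ^ 2 + (X 1) ^ 2 ≠ 0 := ne_of_gt (rad_pos_sum h)
  have h1 : HasDerivAt (fun s : ℝ => (X 0) ^ 2 + s ^ 2) (2 * X 1) (X 1) := by
    simpa using ((hasDerivAt_pow 2 (X 1)).const_add ((X 0) ^ 2))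
  have h2 := (Real.hasDerivAt_sqrt hne).comp (X 1) h1
  have h3 : 1 / (2 * Real.sqrt ((X 0) ^ 2 + (X 1) ^ 2)) * (2 * X 1) = X 1 / rad X := by
    rw [show Real.sqrt ((X 0) ^ 2 + (X 1) ^ 2) = rad X from rfl]
    field_simp
  rwa [h3] at h2

end RadFacts

section DefGrad

variable {G : ℝ → ℝ → ℝ} (hG : ContDiff ℝ 3 (fun q : ℝ × ℝ => G q.1 q.2))

lemma dg_apply (G : ℝ → ℝ → ℝ) (t : ℝ) (X : Fin 3 → ℝ) (i j : Fin 3) :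
    defGrad G t X i j = pd (fun Y => defm G t Y i) j X := rfl

lemma pd_proj (X : Fin 3 → ℝ) (i j : Fin 3) :
    pd (fun Y => Y i) j X = if i = j then 1 else 0 := by
  rcases eq_or_ne i j with rfl | hij
  · simp [pd, Function.update_self]
  · simp [pd, Function.update_of_ne hij.symm, hij]

include hG
lemma dg20 {t : ℝ} {X : Fin 3 → ℝ} (h : rad X > 0) :
    defGrad G t X 2 0 = dR G t (rad X) * (X 0 / rad X) := by
  rw [dg_apply]
  simp only [defm, Matrix.cons_val_two, Matrix.tail_cons, Matrix.head_cons]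
  rw [pd]
  have e : (fun s => Function.update X 0 s 2 + G t (rad (Function.update X 0 s)))
      = fun s => X 2 + G t (Real.sqrt (s ^ 2 + (X 1) ^ 2)) := by
    funext s
    rw [Function.update_of_ne (by decide), rad_update0]
  rw [e]
  have hc := (hdG_R hG t (rad X)).comp (X 0)
    (by simpa [show Real.sqrt ((X 0) ^ 2 + (X 1) ^ 2) = rad X from rfl]
      using hasDerivAt_rad0 h)
  exact (hc.const_add (X 2)).deriv

lemma dg21 {t : ℝ} {X : Fin 3 → ℝ} (h : rad X > 0) :
    defGrad G t X 2 1 = dR G t (rad X) * (X 1 / rad X) := by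
  rw [dg_apply]
  simp only [defm, Matrix.cons_val_two, Matrix.tail_cons, Matrix.head_cons]
  rw [pd]
  have e : (fun s => Function.update X 1 s 2 + G t (rad (Function.update X 1 s)))
      = fun s => X 2 + G t (Real.sqrt ((X 0) ^ 2 + s ^ 2)) := by
    funext s
    rw [Function.update_of_ne (by decide), rad_update1]
  rw [e]
  have hc := (hdG_R hG t (rad X)).comp (X 1)
    (by simpa [show Real.sqrt ((X 0) ^ 2 + (X 1) ^ 2) = rad X from rfl]
      using hasDerivAt_rad1 h)
  exact (hc.const_add (X 2)).deriv

omit hG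
lemma dg22 (G : ℝ → ℝ → ℝ) (t : ℝ) (X : Fin 3 → ℝ) :
    defGrad G t X 2 2 = 1 := by
  rw [dg_apply]
  simp only [defm, Matrix.cons_val_two, Matrix.tail_cons, Matrix.head_cons]
  rw [pd]
  have e : (fun s => Function.update X 2 s 2 + G t (rad (Function.update X 2 s)))
      = fun s => s + G t (rad X) := by
    funext s
    rw [Function.update_self, rad_update2]
  rw [e]
  simpa using ((hasDerivAt_id (X 2)).add_const (G t (rad X))).deriv

lemma dgtop (G : ℝ → ℝ → ℝ) (t : ℝ) (X : Fin 3 → ℝ) (i j : Fin 3) (hi : i ≠ 2) :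
    defGrad G t X i j = if i = j then 1 else 0 := by
  rw [dg_apply]
  fin_cases i
  · simp only [defm, Matrix.cons_val_zero]
    exact pd_proj X 0 j
  · simp only [defm, Matrix.cons_val_one, Matrix.head_cons]
    exact pd_proj X 1 j
  · exact absurd rfl hi

include hG
lemma defGrad_eq {t : ℝ} {X : Fin 3 → ℝ} (h : rad X > 0) :
    defGrad G t X =
      !![1, 0, 0; 0, 1, 0;
         dR G t (rad X) * (X 0 / rad X), dR G t (rad X) * (X 1 / rad X), 1] := by
  ext i j
  fin_cases i <;> fin_cases j
  · simpa using dgtop G t X 0 0 (by decide)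
  · simpa using dgtop G t X 0 1 (by decide)
  · simpa using dgtop G t X 0 2 (by decide)
  · simpa using dgtop G t X 1 0 (by decide)
  · simpa using dgtop G t X 1 1 (by decide)
  · simpa using dgtop G t X 1 2 (by decide)
  · simpa using dg20 hG h
  · simpa using dg21 hG h
  · simpa using dg22 G t X

end DefGrad
section CGfacts

variable {G : ℝ → ℝ → ℝ} (hG : ContDiff ℝ 3 (fun q : ℝ × ℝ => G q.1 q.2))

lemma n_sq_one {X : Fin 3 → ℝ} (h : rad X > 0) :
    (X 0 / rad X) ^ 2 + (X 1 / rad X) ^ 2 = 1 := by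
  have h2 := rad_sq h
  field_simp
  linarith

lemma transpose_lit (x y : ℝ) :
    (!![1, 0, 0; 0, 1, 0; x, y, 1])ᵀ = !![1, 0, x; 0, 1, y; 0, 0, 1] := by
  ext i j; fin_cases i <;> fin_cases j <;> rfl

include hG
lemma CG_eq {t : ℝ} {X : Fin 3 → ℝ} (h : rad X > 0) :
    CG G t X =
      !![1 + dR G t (rad X)^2*(X 0 / rad X)^2,
         dR G t (rad X)^2*(X 0 / rad X)*(X 1 / rad X),
         dR G t (rad X)*(X 0 / rad X);
         dR G t (rad X)^2*(X 0 / rad X)*(X 1 / rad X),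
         1 + dR G t (rad X)^2*(X 1 / rad X)^2,
         dR G t (rad X)*(X 1 / rad X);
         dR G t (rad X)*(X 0 / rad X),
         dR G t (rad X)*(X 1 / rad X), 1] := by
  rw [CG, defGrad_eq hG h, transpose_lit, Matrix.mul_fin_three]
  ext i j
  fin_cases i <;> fin_cases j <;> simp <;> ring

lemma CG_inv {t : ℝ} {X : Fin 3 → ℝ} (h : rad X > 0) :
    (CG G t X)⁻¹ =
      !![1, 0, -(dR G t (rad X)*(X 0 / rad X));
         0, 1, -(dR G t (rad X)*(X 1 / rad X));
         -(dR G t (rad X)*(X 0 / rad X)), -(dR G t (rad X)*(X 1 / rad X)),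
           1 + dR G t (rad X)^2] := by
  have hn := n_sq_one h
  apply Matrix.inv_eq_right_inv
  rw [CG_eq hG h, Matrix.mul_fin_three]
  ext i j
  have hn2 := rad_sq h
  have hr := h.ne'
  fin_cases i <;> fin_cases j <;> simp [Matrix.one_apply] <;> field_simp <;> ring_nf
  · linear_combination (-(dR G t (rad X) ^ 3 * X 0)) * hn2
  · linear_combination (-(dR G t (rad X) ^ 3 * X 1)) * hn2
  · linear_combination (-(dR G t (rad X) ^ 2)) * hn2


end CGfacts
section CGdotFacts

variable {G : ℝ → ℝ → ℝ} (hG : ContDiff ℝ 3 (fun q : ℝ × ℝ => G q.1 q.2))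

lemma symM_of_symm (M : Matrix (Fin 3) (Fin 3) ℝ) (h : Mᵀ = M) : symM M = M := by
  ext i j
  simp [symM, Matrix.transpose_apply] at *
  have := congrFun (congrFun h j) i
  simp [Matrix.transpose_apply] at this
  rw [this]; ring

lemma CG_symm (G : ℝ → ℝ → ℝ) (t : ℝ) (X : Fin 3 → ℝ) : (CG G t X)ᵀ = CG G t X := by
  rw [CG, Matrix.transpose_mul, Matrix.transpose_transpose]

include hG

lemma CGdot_00 {t : ℝ} {X : Fin 3 → ℝ} (h : rad X > 0) :
    CGdot G t X 0 0 =
      2 * dR G t (rad X) * dt (dR G) t (rad X) * (X 0 / rad X) ^ 2 := by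
  have e : (fun τ => CG G τ X 0 0)
      = fun τ => 1 + dR G τ (rad X) ^ 2 * (X 0 / rad X) ^ 2 := by
    funext τ; rw [CG_eq hG h]; simp
  rw [show CGdot G t X 0 0 = deriv (fun τ => CG G τ X 0 0) t from rfl, e]
  have hd := (((hd_dRG_t hG t (rad X)).pow 2).mul_const ((X 0 / rad X) ^ 2)).const_add 1
  exact hd.deriv.trans (by norm_num <;> ring)

lemma CGdot_01 {t : ℝ} {X : Fin 3 → ℝ} (h : rad X > 0) :
    CGdot G t X 0 1 =
      2 * dR G t (rad X) * dt (dR G) t (rad X) * ((X 0 / rad X) * (X 1 / rad X)) := by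
  have e : (fun τ => CG G τ X 0 1)
      = fun τ => dR G τ (rad X) ^ 2 * (X 0 / rad X) * (X 1 / rad X) := by
    funext τ; rw [CG_eq hG h]; simp
  rw [show CGdot G t X 0 1 = deriv (fun τ => CG G τ X 0 1) t from rfl, e]
  have hd := (((hd_dRG_t hG t (rad X)).pow 2).mul_const ((X 0 / rad X))).mul_const
    ((X 1 / rad X))
  exact hd.deriv.trans (by norm_num <;> ring)

lemma CGdot_02 {t : ℝ} {X : Fin 3 → ℝ} (h : rad X > 0) :
    CGdot G t X 0 2 = dt (dR G) t (rad X) * (X 0 / rad X) := by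
  have e : (fun τ => CG G τ X 0 2) = fun τ => dR G τ (rad X) * (X 0 / rad X) := by
    funext τ; rw [CG_eq hG h]; simp
  rw [show CGdot G t X 0 2 = deriv (fun τ => CG G τ X 0 2) t from rfl, e]
  have hd := (hd_dRG_t hG t (rad X)).mul_const ((X 0 / rad X))
  rw [hd.deriv]

lemma CGdot_10 {t : ℝ} {X : Fin 3 → ℝ} (h : rad X > 0) :
    CGdot G t X 1 0 =
      2 * dR G t (rad X) * dt (dR G) t (rad X) * ((X 0 / rad X) * (X 1 / rad X)) := by
  have e : (fun τ => CG G τ X 1 0)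
      = fun τ => dR G τ (rad X) ^ 2 * (X 0 / rad X) * (X 1 / rad X) := by
    funext τ; rw [CG_eq hG h]; simp
  rw [show CGdot G t X 1 0 = deriv (fun τ => CG G τ X 1 0) t from rfl, e]
  have hd := (((hd_dRG_t hG t (rad X)).pow 2).mul_const ((X 0 / rad X))).mul_const
    ((X 1 / rad X))
  exact hd.deriv.trans (by norm_num <;> ring)

lemma CGdot_11 {t : ℝ} {X : Fin 3 → ℝ} (h : rad X > 0) :
    CGdot G t X 1 1 =
      2 * dR G t (rad X) * dt (dR G) t (rad X) * (X 1 / rad X) ^ 2 := by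
  have e : (fun τ => CG G τ X 1 1)
      = fun τ => 1 + dR G τ (rad X) ^ 2 * (X 1 / rad X) ^ 2 := by
    funext τ; rw [CG_eq hG h]; simp
  rw [show CGdot G t X 1 1 = deriv (fun τ => CG G τ X 1 1) t from rfl, e]
  have hd := (((hd_dRG_t hG t (rad X)).pow 2).mul_const ((X 1 / rad X) ^ 2)).const_add 1
  exact hd.deriv.trans (by norm_num <;> ring)

lemma CGdot_12 {t : ℝ} {X : Fin 3 → ℝ} (h : rad X > 0) :
    CGdot G t X 1 2 = dt (dR G) t (rad X) * (X 1 / rad X) := by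
  have e : (fun τ => CG G τ X 1 2) = fun τ => dR G τ (rad X) * (X 1 / rad X) := by
    funext τ; rw [CG_eq hG h]; simp
  rw [show CGdot G t X 1 2 = deriv (fun τ => CG G τ X 1 2) t from rfl, e]
  have hd := (hd_dRG_t hG t (rad X)).mul_const ((X 1 / rad X))
  rw [hd.deriv]

lemma CGdot_20 {t : ℝ} {X : Fin 3 → ℝ} (h : rad X > 0) :
    CGdot G t X 2 0 = dt (dR G) t (rad X) * (X 0 / rad X) := by
  have e : (fun τ => CG G τ X 2 0) = fun τ => dR G τ (rad X) * (X 0 / rad X) := by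
    funext τ; rw [CG_eq hG h]; simp
  rw [show CGdot G t X 2 0 = deriv (fun τ => CG G τ X 2 0) t from rfl, e]
  have hd := (hd_dRG_t hG t (rad X)).mul_const ((X 0 / rad X))
  rw [hd.deriv]

lemma CGdot_21 {t : ℝ} {X : Fin 3 → ℝ} (h : rad X > 0) :
    CGdot G t X 2 1 = dt (dR G) t (rad X) * (X 1 / rad X) := by
  have e : (fun τ => CG G τ X 2 1) = fun τ => dR G τ (rad X) * (X 1 / rad X) := by
    funext τ; rw [CG_eq hG h]; simp
  rw [show CGdot G t X 2 1 = deriv (fun τ => CG G τ X 2 1) t from rfl, e]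
  have hd := (hd_dRG_t hG t (rad X)).mul_const ((X 1 / rad X))
  rw [hd.deriv]

lemma CGdot_22 {t : ℝ} {X : Fin 3 → ℝ} (h : rad X > 0) : CGdot G t X 2 2 = 0 := by
  have e : (fun τ => CG G τ X 2 2) = fun _ => (1 : ℝ) := by
    funext τ; rw [CG_eq hG h]; simp
  rw [show CGdot G t X 2 2 = deriv (fun τ => CG G τ X 2 2) t from rfl, e, deriv_const]

lemma CGdot_eq {t : ℝ} {X : Fin 3 → ℝ} (h : rad X > 0) :
    CGdot G t X =
      !![2 * dR G t (rad X) * dt (dR G) t (rad X) * (X 0 / rad X) ^ 2,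
         2 * dR G t (rad X) * dt (dR G) t (rad X) * ((X 0 / rad X) * (X 1 / rad X)),
         dt (dR G) t (rad X) * (X 0 / rad X);
         2 * dR G t (rad X) * dt (dR G) t (rad X) * ((X 0 / rad X) * (X 1 / rad X)),
         2 * dR G t (rad X) * dt (dR G) t (rad X) * (X 1 / rad X) ^ 2,
         dt (dR G) t (rad X) * (X 1 / rad X);
         dt (dR G) t (rad X) * (X 0 / rad X),
         dt (dR G) t (rad X) * (X 1 / rad X), 0] := by
  ext i j
  fin_cases i <;> fin_cases j
  · simpa using CGdot_00 hG h
  · simpa using CGdot_01 hG h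
  · simpa using CGdot_02 hG h
  · simpa using CGdot_10 hG h
  · simpa using CGdot_11 hG h
  · simpa using CGdot_12 hG h
  · simpa using CGdot_20 hG h
  · simpa using CGdot_21 hG h
  · simpa using CGdot_22 hG h

lemma CGdot_symm {t : ℝ} {X : Fin 3 → ℝ} (h : rad X > 0) :
    (CGdot G t X)ᵀ = CGdot G t X := by
  rw [CGdot_eq hG h]
  ext i j
  fin_cases i <;> fin_cases j <;> simp [Matrix.transpose_apply]

end CGdotFacts
section MatPD

variable {C D E : Matrix (Fin 3) (Fin 3) ℝ}

lemma symM_line (hC : Cᵀ = C) (s : ℝ) (E : Matrix (Fin 3) (Fin 3) ℝ) :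
    symM (C + s • E) = C + s • symM E := by
  ext i j
  have hc := congrFun (congrFun hC j) i
  simp [symM, Matrix.transpose_apply] at hc ⊢
  rw [hc]; ring

lemma inv1_line (C D : Matrix (Fin 3) (Fin 3) ℝ) (s : ℝ) :
    inv1 (C + s • D) = inv1 C + s * inv1 D := by
  simp [inv1, Matrix.trace_add, Matrix.trace_smul]

lemma inv2_line (C D : Matrix (Fin 3) (Fin 3) ℝ) (s : ℝ) :
    inv2 (C + s • D) = inv2 C + s * (inv1 C * inv1 D - (C * D).trace)
      + s ^ 2 * ((inv1 D ^ 2 - (D * D).trace) / 2) := by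
  simp only [inv2, inv1, Matrix.add_mul, Matrix.mul_add, Matrix.smul_mul,
    Matrix.mul_smul, Matrix.trace_add, Matrix.trace_smul, smul_smul, smul_eq_mul,
    Matrix.trace_mul_comm D C]
  ring

lemma inv4_line (A : Fin 3 → ℝ) (C D : Matrix (Fin 3) (Fin 3) ℝ) (s : ℝ) :
    inv4 A (C + s • D) = inv4 A C + s * inv4 A D := by
  simp [inv4, Matrix.add_mulVec, Matrix.smul_mulVec, dotProduct_add,
    dotProduct_smul, smul_eq_mul]

lemma inv8_line (A B : Fin 3 → ℝ) (C D : Matrix (Fin 3) (Fin 3) ℝ) (s : ℝ) :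
    inv8 A B (C + s • D) = inv8 A B C + s * inv8 A B D := by
  simp [inv8, Matrix.add_mulVec, Matrix.smul_mulVec, dotProduct_add,
    dotProduct_smul, smul_eq_mul]
  ring

lemma J2_line (D E : Matrix (Fin 3) (Fin 3) ℝ) (s : ℝ) :
    J2inv (D + s • E) = J2inv D + s * (2 * (D * E).trace) + s ^ 2 * J2inv E := by
  simp only [J2inv, Matrix.add_mul, Matrix.mul_add, Matrix.smul_mul, Matrix.mul_smul,
    Matrix.trace_add, Matrix.trace_smul, smul_smul, smul_eq_mul,
    Matrix.trace_mul_comm E D]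
  ring

-- std basis matrix facts
lemma symM_std_dot (A B : Fin 3 → ℝ) (i j : Fin 3) :
    A ⬝ᵥ (symM (Matrix.single i j 1) *ᵥ B) = (A i * B j + A j * B i) / 2 := by
  fin_cases i <;> fin_cases j <;>
    simp [symM, Matrix.single, Matrix.mulVec, dotProduct,
      Fin.sum_univ_three, Matrix.transpose_apply] <;>
    first
      | ring1
      | (left; norm_num)

lemma symM_std_trace (i j : Fin 3) :
    (symM (Matrix.single i j (1:ℝ))).trace = if i = j then 1 else 0 := by
  fin_cases i <;> fin_cases j <;>
    simp [symM, Matrix.single, Matrix.trace_fin_three,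
      Matrix.transpose_apply] <;> norm_num

lemma symM_std_mul_trace (C : Matrix (Fin 3) (Fin 3) ℝ) (hC : Cᵀ = C) (i j : Fin 3) :
    (C * symM (Matrix.single i j 1)).trace = C i j := by
  have hc : ∀ k l, C l k = C k l := fun k l => by
    have := congrFun (congrFun hC l) k
    simpa [Matrix.transpose_apply] using this.symm
  fin_cases i <;> fin_cases j <;>
    simp [symM, Matrix.single, Matrix.trace_fin_three, Matrix.mul_apply,
      Fin.sum_univ_three, Matrix.transpose_apply] <;>
    rw [hc] <;> ring

-- quadratic derivative helper
lemma hasDerivAt_affine (c0 c1 : ℝ) : HasDerivAt (fun s : ℝ => c0 + s * c1) c1 0 := by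
  simpa using ((hasDerivAt_id (0:ℝ)).mul_const c1).const_add c0

lemma hasDerivAt_quad (c0 c1 c2 : ℝ) :
    HasDerivAt (fun s : ℝ => c0 + s * c1 + s ^ 2 * c2) c1 0 := by
  have h := (hasDerivAt_affine c0 c1).add ((hasDerivAt_pow 2 (0:ℝ)).mul_const c2)
  simp at h; exact h

lemma matPD_Wh (a b q₁ q₂ K₃ K₄ β : ℝ) (X : Fin 3 → ℝ)
    (C : Matrix (Fin 3) (Fin 3) ℝ) (hC : Cᵀ = C) (i j : Fin 3) :
    matPD (storedWMR a b q₁ q₂ K₃ K₄ β X) C i j =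
      a * (if i = j then 1 else 0)
      + b * (inv1 C * (if i = j then 1 else 0) - C i j)
      + q₁ * (2 * (inv4 (fib1 β X) C - 1) * (fib1 β X i * fib1 β X j))
      + q₂ * (2 * (inv4 (fib2 β X) C - 1) * (fib2 β X i * fib2 β X j))
      + K₃ * (2 * inv8 (fib1 β X) (fib2 β X) C *
          ((fib1 β X ⬝ᵥ fib2 β X) * ((fib1 β X i * fib2 β X j + fib1 β X j * fib2 β X i) / 2)))
      + K₄ * ((fib1 β X ⬝ᵥ fib2 β X) *
          ((fib1 β X i * fib2 β X j + fib1 β X j * fib2 β X i) / 2)) := by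
  set A₁ := fib1 β X
  set A₂ := fib2 β X
  set E' := symM (Matrix.single i j 1) with hE'
  have hfun : (fun s : ℝ => storedWMR a b q₁ q₂ K₃ K₄ β X
      (C + s • Matrix.single i j 1)) =
      fun s => a * ((inv1 C + s * inv1 E') - 3)
        + b * ((inv2 C + s * (inv1 C * inv1 E' - (C * E').trace)
            + s ^ 2 * ((inv1 E' ^ 2 - (E' * E').trace) / 2)) - 3)
        + q₁ * ((inv4 A₁ C + s * inv4 A₁ E') - 1) ^ 2
        + q₂ * ((inv4 A₂ C + s * inv4 A₂ E') - 1) ^ 2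
        + K₃ * (inv8 A₁ A₂ C + s * inv8 A₁ A₂ E') ^ 2
        + K₄ * (inv8 A₁ A₂ C + s * inv8 A₁ A₂ E') := by
    funext s
    rw [storedWMR, symM_line hC, inv1_line, inv2_line, inv4_line, inv4_line, inv8_line]
  have hd : HasDerivAt (fun s : ℝ => storedWMR a b q₁ q₂ K₃ K₄ β X
      (C + s • Matrix.single i j 1))
      (a * inv1 E'
        + b * (inv1 C * inv1 E' - (C * E').trace)
        + q₁ * (2 * (inv4 A₁ C - 1) ^ 1 * inv4 A₁ E')
        + q₂ * (2 * (inv4 A₂ C - 1) ^ 1 * inv4 A₂ E')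
        + K₃ * (2 * inv8 A₁ A₂ C ^ 1 * inv8 A₁ A₂ E')
        + K₄ * inv8 A₁ A₂ E') 0 := by
    rw [hfun]
    have h1 := ((hasDerivAt_affine (inv1 C) (inv1 E')).sub_const 3).const_mul a
    have h2 := ((hasDerivAt_quad (inv2 C) (inv1 C * inv1 E' - (C * E').trace)
      ((inv1 E' ^ 2 - (E' * E').trace) / 2)).sub_const 3).const_mul b
    have h4 := (((hasDerivAt_affine (inv4 A₁ C) (inv4 A₁ E')).sub_const 1).pow 2).const_mul q₁
    have h6 := (((hasDerivAt_affine (inv4 A₂ C) (inv4 A₂ E')).sub_const 1).pow 2).const_mul q₂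
    have h8 := ((hasDerivAt_affine (inv8 A₁ A₂ C) (inv8 A₁ A₂ E')).pow 2).const_mul K₃
    have h8' := (hasDerivAt_affine (inv8 A₁ A₂ C) (inv8 A₁ A₂ E')).const_mul K₄
    have := ((((h1.add h2).add h4).add h6).add h8).add h8'
    refine this.congr_deriv ?_
    ring
  rw [matPD, Matrix.of_apply, hd.deriv]
  have e1 : inv1 E' = if i = j then 1 else 0 := symM_std_trace i j
  have e2 : (C * E').trace = C i j := symM_std_mul_trace C hC i j
  have e4 : inv4 A₁ E' = (A₁ i * A₁ j + A₁ j * A₁ i) / 2 := symM_std_dot A₁ A₁ i j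
  have e6 : inv4 A₂ E' = (A₂ i * A₂ j + A₂ j * A₂ i) / 2 := symM_std_dot A₂ A₂ i j
  have e8 : inv8 A₁ A₂ E' = (A₁ ⬝ᵥ A₂) * ((A₁ i * A₂ j + A₁ j * A₂ i) / 2) := by
    rw [inv8, symM_std_dot A₁ A₂ i j]
  rw [e1, e2, e4, e6, e8]
  ring

lemma matPD_Wv (μ₁ μ₂ β : ℝ) (X : Fin 3 → ℝ)
    (Cm D : Matrix (Fin 3) (Fin 3) ℝ) (hD : Dᵀ = D)
    (h4 : inv4 (fib1 β X) (symM Cm) = 1) (h6 : inv4 (fib2 β X) (symM Cm) = 1)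
    (i j : Fin 3) :
    matPD (fun D' => storedWv μ₁ μ₂ β X Cm D') D i j =
      μ₁ / 2 * (inv1 (symM Cm) - 3) * D i j := by
  set E' := symM (Matrix.single i j 1) with hE'
  have hfun : (fun s : ℝ => storedWv μ₁ μ₂ β X Cm
      (D + s • Matrix.single i j 1)) =
      fun s => μ₁ / 4 * (J2inv D + s * (2 * (D * E').trace) + s ^ 2 * J2inv E')
        * (inv1 (symM Cm) - 3) := by
    funext s
    rw [storedWv, symM_line hD, J2_line, h4, h6]
    simp
    left; left; rfl
  have hd : HasDerivAt (fun s : ℝ => storedWv μ₁ μ₂ β X Cm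
      (D + s • Matrix.single i j 1))
      (μ₁ / 4 * (2 * (D * E').trace) * (inv1 (symM Cm) - 3)) 0 := by
    rw [hfun]
    have h := ((hasDerivAt_quad (J2inv D) (2 * (D * E').trace) (J2inv E')).const_mul
      (μ₁ / 4)).mul_const (inv1 (symM Cm) - 3)
    convert h using 1
    all_goals first
      | ring1
      | (funext s; ring)
  rw [matPD, Matrix.of_apply, hd.deriv, symM_std_mul_trace D hD i j]
  ring

end MatPD
section InvValues

variable {G : ℝ → ℝ → ℝ} (hG : ContDiff ℝ 3 (fun q : ℝ × ℝ => G q.1 q.2))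

lemma fib_dot {β : ℝ} {X : Fin 3 → ℝ} (h : rad X > 0) :
    fib1 β X ⬝ᵥ fib2 β X = Real.cos β ^ 2 - Real.sin β ^ 2 := by
  have hn := n_sq_one h
  simp [fib1, fib2, dotProduct, Fin.sum_univ_three]
  linear_combination (Real.cos β ^ 2) * hn

include hG

lemma inv1_val {t : ℝ} {X : Fin 3 → ℝ} (h : rad X > 0) :
    inv1 (CG G t X) = 3 + dR G t (rad X) ^ 2 := by
  have hn := n_sq_one h
  rw [CG_eq hG h, inv1, Matrix.trace_fin_three]
  simp
  linear_combination (dR G t (rad X) ^ 2) * hn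

lemma inv4_val1 {β t : ℝ} {X : Fin 3 → ℝ} (h : rad X > 0) :
    inv4 (fib1 β X) (CG G t X) = 1 := by
  have hn := n_sq_one h
  have hsc := Real.sin_sq_add_cos_sq β
  rw [CG_eq hG h, inv4]
  simp [fib1, Matrix.mulVec, dotProduct, Fin.sum_univ_three]
  linear_combination (Real.cos β ^ 2 + Real.cos β ^ 2 * dR G t (rad X) ^ 2 * (X 0 / rad X) * (X 1 / rad X) * 0) * hn + hsc

lemma inv4_val2 {β t : ℝ} {X : Fin 3 → ℝ} (h : rad X > 0) :
    inv4 (fib2 β X) (CG G t X) = 1 := by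
  have hn := n_sq_one h
  have hsc := Real.sin_sq_add_cos_sq β
  rw [CG_eq hG h, inv4]
  simp [fib2, Matrix.mulVec, dotProduct, Fin.sum_univ_three]
  linear_combination (Real.cos β ^ 2) * hn + hsc

lemma inv8_val {β t : ℝ} {X : Fin 3 → ℝ} (h : rad X > 0) :
    inv8 (fib1 β X) (fib2 β X) (CG G t X) =
      (Real.cos β ^ 2 - Real.sin β ^ 2) ^ 2 := by
  have hn := n_sq_one h
  rw [inv8, fib_dot h, CG_eq hG h]
  simp [fib1, fib2, Matrix.mulVec, dotProduct, Fin.sum_univ_three]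
  linear_combination ((Real.cos β ^ 2 - Real.sin β ^ 2) * Real.cos β ^ 2) * hn

end InvValues
section Prow

variable {a b q₁ q₂ K₃ K₄ μ₁ μ₂ β ρ₀ : ℝ} {p G : ℝ → ℝ → ℝ}
variable (hG : ContDiff ℝ 3 (fun q : ℝ × ℝ => G q.1 q.2))

include hG

lemma P_entry {t : ℝ} {X : Fin 3 → ℝ} (h : rad X > 0) (j : Fin 3) :
    PK1v (storedWMR a b q₁ q₂ K₃ K₄ β) (storedWv μ₁ μ₂ β) p ρ₀ G t X 2 j =
      if j = 2 then
        -(p t (rad X)) + 2*ρ₀*(a + 2*b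
          - (2*K₃*(Real.cos β ^ 2 - Real.sin β ^ 2) ^ 2 + K₄)
            * (Real.cos β ^ 2 - Real.sin β ^ 2) * Real.sin β ^ 2)
        + ρ₀ * μ₁ * dR G t (rad X) ^ 3 * dt (dR G) t (rad X)
      else
        ρ₀ * (2*(a+b)*dR G t (rad X)
          + μ₁ * dR G t (rad X) ^ 2 * dt (dR G) t (rad X)
            * (1 + 2 * dR G t (rad X) ^ 2)) * (X j / rad X) := by
  have hn := n_sq_one h
  have hsc := Real.sin_sq_add_cos_sq β
  have hsym := CG_symm G t X
  have hDsym := CGdot_symm hG (t := t) h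
  have h4' : inv4 (fib1 β X) (symM (CG G t X)) = 1 := by
    rw [symM_of_symm _ hsym]; exact inv4_val1 hG h
  have h6' : inv4 (fib2 β X) (symM (CG G t X)) = 1 := by
    rw [symM_of_symm _ hsym]; exact inv4_val2 hG h
  have h1' : inv1 (symM (CG G t X)) = 3 + dR G t (rad X) ^ 2 := by
    rw [symM_of_symm _ hsym]; exact inv1_val hG h
  rw [PK1v, Matrix.mul_apply, Fin.sum_univ_three]
  simp only [Matrix.add_apply, Matrix.smul_apply, smul_eq_mul]
  simp only [matPD_Wh a b q₁ q₂ K₃ K₄ β X (CG G t X) hsym,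
    matPD_Wv μ₁ μ₂ β X (CG G t X) (CGdot G t X) hDsym h4' h6']
  rw [inv1_val hG h, inv4_val1 hG h, inv4_val2 hG h, inv8_val hG h, fib_dot h, h1',
    dg20 hG h, dg21 hG h, dg22 G t X, CG_inv hG h, CGdot_eq hG h, CG_eq hG h]
  fin_cases j <;> simp [fib1, fib2] <;> ring_nf
  · linear_combination ((2*ρ₀*μ₁*dt (dR G) t (rad X)*dR G t (rad X)^4
      - 2*b*ρ₀*dR G t (rad X)^3) * (X 0 / rad X)) * hn
  · linear_combination ((2*ρ₀*μ₁*dt (dR G) t (rad X)*dR G t (rad X)^4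
      - 2*b*ρ₀*dR G t (rad X)^3) * (X 1 / rad X)) * hn
  · linear_combination (dR G t (rad X)^2 * p t (rad X) - 2*b*ρ₀*dR G t (rad X)^2
      + ρ₀*μ₁*dt (dR G) t (rad X)*dR G t (rad X)^3) * hn




end Prow
/-- The shear stress profile `f(t,r)`. -/
def shear (a b μ₁ ρ₀ : ℝ) (G : ℝ → ℝ → ℝ) (t r : ℝ) : ℝ :=
  ρ₀ * (2*(a+b)*dR G t r + μ₁ * ((dR G t r)^2 * dt (dR G) t r * (1 + 2*(dR G t r)^2)))

/-- Radial derivative of the shear stress profile. -/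
def shearR (a b μ₁ ρ₀ : ℝ) (G : ℝ → ℝ → ℝ) (t r : ℝ) : ℝ :=
  ρ₀ * (2*(a+b)*dR (dR G) t r
    + μ₁ * ((2*dR G t r*dR (dR G) t r*dt (dR G) t r
          + (dR G t r)^2*dR (dt (dR G)) t r) * (1+2*(dR G t r)^2)
        + (dR G t r)^2 * dt (dR G) t r * (4*dR G t r*dR (dR G) t r)))

section Divergence

variable {a b q₁ q₂ K₃ K₄ μ₁ μ₂ β ρ₀ : ℝ} {p G : ℝ → ℝ → ℝ}
variable (hG : ContDiff ℝ 3 (fun q : ℝ × ℝ => G q.1 q.2))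

include hG

lemma hasDerivAt_shear (t r : ℝ) :
    HasDerivAt (fun r' => shear a b μ₁ ρ₀ G t r') (shearR a b μ₁ ρ₀ G t r) r := by
  have hg := hd_dRG_R hG t r
  have hk := hd_dtRG_R hG t r
  have h1 := hg.const_mul (2*(a+b))
  have h2 := hg.pow 2
  have h3 := h2.mul hk
  have h4 := (h2.const_mul 2).const_add 1
  have h5 := ((h3.mul h4).const_mul μ₁)
  have h6 := (h1.add h5).const_mul ρ₀
  unfold shear shearR
  refine h6.congr_deriv ?_
  simp only [Pi.pow_apply, Pi.mul_apply, Nat.cast_ofNat, show (2:ℕ) - 1 = 1 from rfl, pow_one]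
  ring

lemma pd_P2 {t : ℝ} {X : Fin 3 → ℝ} (h : rad X > 0) :
    pd (fun Y => PK1v (storedWMR a b q₁ q₂ K₃ K₄ β) (storedWv μ₁ μ₂ β) p ρ₀ G t Y 2 2)
      2 X = 0 := by
  rw [pd]
  have e : (fun s => PK1v (storedWMR a b q₁ q₂ K₃ K₄ β) (storedWv μ₁ μ₂ β) p ρ₀ G t
      (Function.update X 2 s) 2 2) =
      fun _ => -(p t (rad X)) + 2*ρ₀*(a + 2*b
          - (2*K₃*(Real.cos β ^ 2 - Real.sin β ^ 2) ^ 2 + K₄)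
            * (Real.cos β ^ 2 - Real.sin β ^ 2) * Real.sin β ^ 2)
        + ρ₀ * μ₁ * dR G t (rad X) ^ 3 * dt (dR G) t (rad X) := by
    funext s
    have hr2 : rad (Function.update X 2 s) > 0 := by rw [rad_update2]; exact h
    rw [P_entry hG hr2, if_pos rfl, rad_update2]
  rw [e, deriv_const]

lemma pd_P0 {t : ℝ} {X : Fin 3 → ℝ} (h : rad X > 0) :
    pd (fun Y => PK1v (storedWMR a b q₁ q₂ K₃ K₄ β) (storedWv μ₁ μ₂ β) p ρ₀ G t Y 2 0)
      0 X =
      shearR a b μ₁ ρ₀ G t (rad X) * (X 0 / rad X) * (X 0 / rad X)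
      + shear a b μ₁ ρ₀ G t (rad X) *
          ((1 * rad X - X 0 * (X 0 / rad X)) / rad X ^ 2) := by
  rw [pd]
  have hopen : ∀ᶠ s in nhds (X 0), 0 < s ^ 2 + (X 1) ^ 2 := by
    have hc : Continuous fun s : ℝ => s ^ 2 + (X 1) ^ 2 := by continuity
    exact (isOpen_lt continuous_const hc).eventually_mem (rad_pos_sum h)
  have hev : (fun s => PK1v (storedWMR a b q₁ q₂ K₃ K₄ β) (storedWv μ₁ μ₂ β) p ρ₀ G t
      (Function.update X 0 s) 2 0) =ᶠ[nhds (X 0)]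
      fun s => shear a b μ₁ ρ₀ G t (Real.sqrt (s ^ 2 + (X 1) ^ 2))
        * (s / Real.sqrt (s ^ 2 + (X 1) ^ 2)) := by
    filter_upwards [hopen] with s hs
    have hr : rad (Function.update X 0 s) > 0 := by
      rw [rad_update0]; exact Real.sqrt_pos.mpr hs
    rw [P_entry hG hr, if_neg (by decide), rad_update0, Function.update_self]
    unfold shear
    ring
  rw [hev.deriv_eq]
  have hcomp := (hasDerivAt_shear hG (a := a) (b := b) (μ₁ := μ₁) (ρ₀ := ρ₀)
    t (rad X)).comp (X 0) (hasDerivAt_rad0 h)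
  have hq := (hasDerivAt_id (X 0)).div (hasDerivAt_rad0 h)
    (show Real.sqrt ((X 0) ^ 2 + (X 1) ^ 2) ≠ 0 from h.ne')
  exact (hcomp.mul hq).deriv

lemma pd_P1 {t : ℝ} {X : Fin 3 → ℝ} (h : rad X > 0) :
    pd (fun Y => PK1v (storedWMR a b q₁ q₂ K₃ K₄ β) (storedWv μ₁ μ₂ β) p ρ₀ G t Y 2 1)
      1 X =
      shearR a b μ₁ ρ₀ G t (rad X) * (X 1 / rad X) * (X 1 / rad X)
      + shear a b μ₁ ρ₀ G t (rad X) *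
          ((1 * rad X - X 1 * (X 1 / rad X)) / rad X ^ 2) := by
  rw [pd]
  have hopen : ∀ᶠ s in nhds (X 1), 0 < (X 0) ^ 2 + s ^ 2 := by
    have hc : Continuous fun s : ℝ => (X 0) ^ 2 + s ^ 2 := by continuity
    exact (isOpen_lt continuous_const hc).eventually_mem (rad_pos_sum h)
  have hev : (fun s => PK1v (storedWMR a b q₁ q₂ K₃ K₄ β) (storedWv μ₁ μ₂ β) p ρ₀ G t
      (Function.update X 1 s) 2 1) =ᶠ[nhds (X 1)]
      fun s => shear a b μ₁ ρ₀ G t (Real.sqrt ((X 0) ^ 2 + s ^ 2))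
        * (s / Real.sqrt ((X 0) ^ 2 + s ^ 2)) := by
    filter_upwards [hopen] with s hs
    have hr : rad (Function.update X 1 s) > 0 := by
      rw [rad_update1]; exact Real.sqrt_pos.mpr hs
    rw [P_entry hG hr, if_neg (by decide), rad_update1, Function.update_self]
    unfold shear
    ring
  rw [hev.deriv_eq]
  have hcomp := (hasDerivAt_shear hG (a := a) (b := b) (μ₁ := μ₁) (ρ₀ := ρ₀)
    t (rad X)).comp (X 1) (hasDerivAt_rad1 h)
  have hq := (hasDerivAt_id (X 1)).div (hasDerivAt_rad1 h)
    (show Real.sqrt ((X 0) ^ 2 + (X 1) ^ 2) ≠ 0 from h.ne')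
  exact (hcomp.mul hq).deriv

lemma pd_sum {t : ℝ} {X : Fin 3 → ℝ} (h : rad X > 0) :
    (∑ j : Fin 3, pd (fun Y =>
        PK1v (storedWMR a b q₁ q₂ K₃ K₄ β) (storedWv μ₁ μ₂ β) p ρ₀ G t Y 2 j) j X)
    = ρ₀ * (2 * (a + b) * (dR G t (rad X) / rad X + dR (dR G) t (rad X))
        + μ₁ * dR G t (rad X) *
          (dR G t (rad X) * (dt (dR G) t (rad X) / rad X + dt (dR (dR G)) t (rad X)) *
              (1 + 2 * (dR G t (rad X)) ^ 2)
            + 2 * dt (dR G) t (rad X) * dR (dR G) t (rad X) *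
              (1 + 4 * (dR G t (rad X)) ^ 2))) := by
  rw [Fin.sum_univ_three, pd_P0 hG h, pd_P1 hG h, pd_P2 hG h, ← mixed_swap hG]
  have hn := n_sq_one h
  have hn2 := rad_sq h
  have hr := h.ne'
  unfold shear shearR
  field_simp
  ring_nf
  linear_combination (ρ₀ * (2*a*(dR (dR G) t (rad X)*rad X - dR G t (rad X))
    + 2*b*(dR (dR G) t (rad X)*rad X - dR G t (rad X))
    + μ₁ * (2*dR (dR G) t (rad X)*dR G t (rad X)*dt (dR G) t (rad X)*rad X
      + 8*dR (dR G) t (rad X)*dR G t (rad X) ^ 3*dt (dR G) t (rad X)*rad X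
      - dR G t (rad X) ^ 2*dt (dR G) t (rad X)
      + dR G t (rad X) ^ 2*dR (dt (dR G)) t (rad X)*rad X
      - 2*dR G t (rad X) ^ 4*dt (dR G) t (rad X)
      + 2*dR G t (rad X) ^ 4*dR (dt (dR G)) t (rad X)*rad X))) * hn2

end Divergence
lemma defm_tt (G : ℝ → ℝ → ℝ) (t : ℝ) (X : Fin 3 → ℝ) :
    deriv (fun τ => deriv (fun σ => defm G σ X 2) τ) t = dt (dt G) t (rad X) := by
  have e : (fun τ => deriv (fun σ => defm G σ X 2) τ) = fun τ => dt G τ (rad X) := by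
    funext τ
    have e2 : (fun σ => defm G σ X 2) = fun σ => X 2 + G σ (rad X) := by
      funext σ; simp [defm]
    rw [e2, deriv_const_add]
    rfl
  rw [e]
  rfl

/-- **Theorem 5.1.** For the visco-hyperelastic model with Mooney–Rivlin /
quadratic-reinforcement elastic energy and viscoelastic potential
`Wᵛ = (μ₁/4)J₂(I₁−3) + (μ₂/2)J₉,₁(I₄−1)² + (μ₂/2)J₉,₂(I₆−1)²`, the third (Z-) component
of the momentum equations holds at all points with `R > 0` iff `G` satisfies
`G_tt = α(G_R/R + G_RR) + μ₁ G_R [G_R (G_tR/R + G_tRR)(1 + 2G_R²)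
  + 2 G_tR G_RR (1 + 4G_R²)]` with `α = 2(a+b)`; in particular this PDE involves neither
`q₁, q₂, K₃, K₄, μ₂` nor `β`, but only `a, b, μ₁`. -/
theorem zMomentum_iff_viscoelastic_wave
    (a b q₁ q₂ K₃ K₄ μ₁ μ₂ : ℝ) (β : ℝ) (hβ : β ∈ Set.Ioo 0 (π / 2))
    (ρ₀ : ℝ) (hρ : ρ₀ > 0)
    (G : ℝ → ℝ → ℝ) (hG : ContDiff ℝ 3 (fun q : ℝ × ℝ => G q.1 q.2))
    (p : ℝ → ℝ → ℝ) (hp : ContDiff ℝ (⊤ : ℕ∞) (fun q : ℝ × ℝ => p q.1 q.2)) :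
    (∀ t : ℝ, ∀ X : Fin 3 → ℝ, rad X > 0 →
        ρ₀ * deriv (fun τ => deriv (fun σ => defm G σ X 2) τ) t =
          ∑ j : Fin 3,
            pd (fun Y =>
              PK1v (storedWMR a b q₁ q₂ K₃ K₄ β) (storedWv μ₁ μ₂ β) p ρ₀ G t Y 2 j) j X)
    ↔
    (∀ t R : ℝ, R > 0 →
        dt (dt G) t R =
          2 * (a + b) * (dR G t R / R + dR (dR G) t R)
          + μ₁ * dR G t R *
            (dR G t R * (dt (dR G) t R / R + dt (dR (dR G)) t R) *
                (1 + 2 * (dR G t R) ^ 2)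
              + 2 * dt (dR G) t R * dR (dR G) t R * (1 + 4 * (dR G t R) ^ 2))) := by
  constructor
  · intro H t R hR
    have hrad : rad ![R, 0, 0] = R := by
      rw [rad]
      norm_num
      exact Real.sqrt_sq hR.le
    have h0 : rad ![R, 0, 0] > 0 := by rw [hrad]; exact hR
    have hh := H t ![R, 0, 0] h0
    rw [defm_tt, pd_sum hG h0, hrad] at hh
    exact mul_left_cancel₀ (ne_of_gt hρ) hh
  · intro H t X hX
    rw [defm_tt, pd_sum hG hX, H t (rad X) hX]
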